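/- The radial projection p(x) = x if ‖x‖ ≤ 1, p(x) = x/‖x‖ if ‖x‖ > 1, onto the unit ball of a Minkowski plane is non-expansive with respect to the antinorm: ‖p(v) − p(w)‖ₐ ≤ ‖v − w‖ₐ for all v, w ∈ V. -/

import Mathlib

/-- The antinorm associated with a norm and a symplectic form `ω`:
`anorm ω x = sup {ω x y : ‖y‖ = 1}`. -/
noncomputable def anorm {V : Type*} [NormedAddCommGroup V] [NormedSpace ℝ V]
    (ω : V →ₗ[ℝ] V →ₗ[ℝ] ℝ) (x : V) : ℝ :=
  sSup {r : ℝ | ∃ y : V, ‖y‖ = 1 ∧ r = ω x y}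

/-- Birkhoff normality: `x ⊣ y` iff `‖x‖ ≤ ‖x + t • y‖` for all `t`. -/
def BNormal {V : Type*} [NormedAddCommGroup V] [NormedSpace ℝ V] (x y : V) : Prop :=
  ∀ t : ℝ, ‖x‖ ≤ ‖x + t • y‖

/-- The radial projection onto the unit ball of the norm. -/
noncomputable def radialProj {V : Type*} [NormedAddCommGroup V] [NormedSpace ℝ V]
    (x : V) : V :=
  if ‖x‖ ≤ 1 then x else ‖x‖⁻¹ • x

/-!
Write a point outside the unit ball as `ρ • u` with `‖u‖ = 1`. It suffices to show
`‖u - w‖ₐ ≤ ‖ρ • u - σ • w‖ₐ` for `‖w‖ ≤ 1` and `1 ≤ σ ≤ ρ`, and this follows as soon as the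
supremum defining `‖u - w‖ₐ` is attained at a unit vector `y` with `[u, y] ≥ 0`. If every
maximiser had `[u, y] < 0`, take the point `r` beyond `u` on the ray from `w` through `u` with
`[y, r] = 0`. In the plane this forces `r ∥ y`, and comparing `[u - w, ·]` at `r` and at `y`
puts `r` strictly inside the ball; then `u`, a proper convex combination of `w` and `r`, would
have norm less than one.
-/

open Module Submodule

theorem exists_eq_smul_of_apply_eq_zero {K V : Type*} [Field K] [AddCommGroup V] [Module K V]
    {ω : V →ₗ[K] V →ₗ[K] K} (hdim : finrank K V = 2) (halt : ω.IsAlt)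
    (hnd : ω.SeparatingLeft) {y r : V} (hy : y ≠ 0) (hr : ω y r = 0) :
    ∃ c : K, r = c • y := by
  have : FiniteDimensional K V := .of_finrank_eq_succ hdim
  have hle : K ∙ y ≤ LinearMap.ker (ω y) :=
    (span_singleton_le_iff_mem _ _).mpr (LinearMap.mem_ker.mpr (halt y))
  have hker : LinearMap.ker (ω y) ≠ ⊤ := fun h =>
    hy (hnd y fun z => LinearMap.mem_ker.mp (h ▸ mem_top))
  have hline : K ∙ y = LinearMap.ker (ω y) := by
    refine eq_of_le_of_finrank_le hle ?_
    have := finrank_lt hker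
    rw [finrank_span_singleton hy]
    omega
  obtain ⟨c, hc⟩ := mem_span_singleton.mp (hline ▸ LinearMap.mem_ker.mpr hr)
  exact ⟨c, hc.symm⟩

section Antinorm

variable {V : Type*} [NormedAddCommGroup V] [NormedSpace ℝ V] (ω : V →ₗ[ℝ] V →ₗ[ℝ] ℝ)

theorem anorm_neg (x : V) : anorm ω (-x) = anorm ω x := by
  unfold anorm
  congr 1
  ext r
  constructor <;> rintro ⟨y, hy, rfl⟩ <;> exact ⟨-y, by simpa using hy, by simp⟩

theorem anorm_sub_comm (x y : V) : anorm ω (x - y) = anorm ω (y - x) := by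
  rw [← anorm_neg, neg_sub]

theorem anorm_nonneg (x : V) : 0 ≤ anorm ω x := by
  rcases subsingleton_or_nontrivial V with hV | hV
  · have hempty : {r : ℝ | ∃ y : V, ‖y‖ = 1 ∧ r = ω x y} = ∅ := by
      ext r
      simp [Subsingleton.elim _ (0 : V)]
    simp [anorm, hempty]
  · obtain ⟨y, hy⟩ := exists_norm_eq V zero_le_one
    apply Real.sSup_nonneg'
    rcases le_total 0 (ω x y) with h | h
    · exact ⟨_, ⟨y, hy, rfl⟩, h⟩
    · exact ⟨_, ⟨-y, by simpa using hy, rfl⟩, by simpa using h⟩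

variable [FiniteDimensional ℝ V]

theorem isCompact_setOf_apply_of_norm_eq_one (x : V) :
    IsCompact {r : ℝ | ∃ y : V, ‖y‖ = 1 ∧ r = ω x y} := by
  have himage : {r : ℝ | ∃ y : V, ‖y‖ = 1 ∧ r = ω x y} = ω x '' Metric.sphere 0 1 := by
    ext r
    simp [eq_comm]
  rw [himage]
  exact (isCompact_sphere 0 1).image (ω x).continuous_of_finiteDimensional

theorem apply_le_anorm (x : V) {y : V} (hy : ‖y‖ = 1) : ω x y ≤ anorm ω x :=
  le_csSup (isCompact_setOf_apply_of_norm_eq_one ω x).bddAbove ⟨y, hy, rfl⟩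

theorem exists_apply_eq_anorm [Nontrivial V] (x : V) : ∃ y : V, ‖y‖ = 1 ∧ ω x y = anorm ω x := by
  obtain ⟨y, hy⟩ := exists_norm_eq V zero_le_one
  obtain ⟨z, hz, hmax⟩ :=
    (isCompact_setOf_apply_of_norm_eq_one ω x).sSup_mem ⟨_, y, hy, rfl⟩
  exact ⟨z, hz, hmax.symm⟩

end Antinorm

section Plane

variable {V : Type*} [NormedAddCommGroup V] [NormedSpace ℝ V] {ω : V →ₗ[ℝ] V →ₗ[ℝ] ℝ}

theorem exists_apply_sub_eq_anorm_of_apply_nonneg (hdim : finrank ℝ V = 2) (halt : ω.IsAlt)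
    (hnd : ω.SeparatingLeft) {u w : V} (hu : ‖u‖ = 1) (hw : ‖w‖ ≤ 1) :
    ∃ y : V, ‖y‖ = 1 ∧ ω (u - w) y = anorm ω (u - w) ∧ 0 ≤ ω u y := by
  have : FiniteDimensional ℝ V := .of_finrank_eq_succ hdim
  have : Nontrivial V := nontrivial_of_finrank_eq_succ hdim
  set a := u - w with ha
  set M := anorm ω a
  obtain ⟨y, hy, hyM⟩ := exists_apply_eq_anorm ω a
  by_contra! hneg
  -- `±u` are not maximisers, since `ω u (±u) = 0`
  have hau : ω a u < M := (apply_le_anorm ω a hu).lt_of_ne fun h => (hneg u hu h).ne (halt u)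
  have hau' : -M < ω a u := by
    have := (apply_le_anorm ω a (y := -u) (by simpa using hu)).lt_of_ne fun h =>
      (hneg (-u) (by simpa using hu) h).ne (by simp [halt u])
    simp only [map_neg] at this
    linarith
  have hM : 0 < M := by linarith
  set m := -ω u y
  have hm : 0 < m := neg_pos.mpr (hneg y hy hyM)
  obtain ⟨c, hc⟩ := exists_eq_smul_of_apply_eq_zero (y := y) (r := M • u + m • a) hdim halt hnd
    (fun h => by simp [h] at hy) (by simp [m, ← halt.neg u y, ← halt.neg a y, hyM]; ring)
  have hc_eq : c = ω a u := by
    have := congrArg (ω a) hc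
    simp only [map_add, map_smul, smul_eq_mul, halt a, hyM, mul_zero, add_zero] at this
    exact mul_right_cancel₀ hM.ne' (by linarith)
  have hr : ‖M • u + m • a‖ < M := by
    rw [hc, norm_smul, hy, mul_one, Real.norm_eq_abs, hc_eq, abs_lt]
    exact ⟨hau', hau⟩
  have htriangle : M + m ≤ ‖M • u + m • a‖ + m * ‖w‖ :=
    calc M + m = ‖(M + m) • u‖ := by rw [norm_smul, hu, Real.norm_of_nonneg (by positivity)]; ring
      _ = ‖(M • u + m • a) + m • w‖ := by rw [ha]; congr 1; module
      _ ≤ ‖M • u + m • a‖ + ‖m • w‖ := norm_add_le _ _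
      _ = ‖M • u + m • a‖ + m * ‖w‖ := by rw [norm_smul, Real.norm_of_nonneg hm.le]
  linarith [mul_le_of_le_one_right hm.le hw]

theorem anorm_sub_le_anorm_smul_sub_smul (hdim : finrank ℝ V = 2) (halt : ω.IsAlt)
    (hnd : ω.SeparatingLeft) {u w : V} {ρ σ : ℝ} (hu : ‖u‖ = 1) (hw : ‖w‖ ≤ 1)
    (hσ : 1 ≤ σ) (hσρ : σ ≤ ρ) :
    anorm ω (u - w) ≤ anorm ω (ρ • u - σ • w) := by
  have : FiniteDimensional ℝ V := .of_finrank_eq_succ hdim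
  obtain ⟨y, hy, hmax, hpos⟩ := exists_apply_sub_eq_anorm_of_apply_nonneg hdim halt hnd hu hw
  calc anorm ω (u - w) ≤ σ * anorm ω (u - w) := le_mul_of_one_le_left (anorm_nonneg ω _) hσ
    _ ≤ σ * ω (u - w) y + (ρ - σ) * ω u y := by
        rw [hmax]; exact le_add_of_nonneg_right (mul_nonneg (by linarith) hpos)
    _ = ω (ρ • u - σ • w) y := by simp only [map_sub, map_smul, LinearMap.sub_apply,
        LinearMap.smul_apply, smul_eq_mul]; ring
    _ ≤ anorm ω (ρ • u - σ • w) := apply_le_anorm ω _ hy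

end Plane

section RadialProj

variable {V : Type*} [NormedAddCommGroup V] [NormedSpace ℝ V]

theorem radialProj_of_norm_le_one {x : V} (hx : ‖x‖ ≤ 1) : radialProj x = x := if_pos hx

theorem norm_radialProj_of_one_lt {x : V} (hx : 1 < ‖x‖) : ‖radialProj x‖ = 1 := by
  rw [radialProj, if_neg hx.not_ge]
  exact norm_smul_inv_norm (norm_pos_iff.mp (one_pos.trans hx))

theorem norm_radialProj_le_one (x : V) : ‖radialProj x‖ ≤ 1 := by
  rcases le_or_gt ‖x‖ 1 with hx | hx
  · rwa [radialProj_of_norm_le_one hx]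
  · exact (norm_radialProj_of_one_lt hx).le

theorem max_norm_one_smul_radialProj (x : V) : max ‖x‖ 1 • radialProj x = x := by
  rcases le_or_gt ‖x‖ 1 with hx | hx
  · rw [max_eq_right hx, one_smul, radialProj_of_norm_le_one hx]
  · rw [max_eq_left hx.le, radialProj, if_neg hx.not_ge, smul_inv_smul₀ (one_pos.trans hx).ne']

end RadialProj

/-- (Karlovitz) The radial projection onto the unit ball is non-expansive with respect to
the antinorm. -/
theorem stmt19 {V : Type*} [NormedAddCommGroup V] [NormedSpace ℝ V]
    (hdim : Module.finrank ℝ V = 2)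
    (ω : V →ₗ[ℝ] V →ₗ[ℝ] ℝ)
    (halt : ∀ x : V, ω x x = 0)
    (hnd : ∀ a : V, (∀ y : V, ω a y = 0) → a = 0) :
    ∀ v w : V, anorm ω (radialProj v - radialProj w) ≤ anorm ω (v - w) := by
  intro v w
  wlog hwv : ‖w‖ ≤ ‖v‖ generalizing v w
  · rw [anorm_sub_comm, anorm_sub_comm ω v]
    exact this w v (le_of_not_ge hwv)
  rcases le_or_gt ‖v‖ 1 with hv | hv
  · rw [radialProj_of_norm_le_one hv, radialProj_of_norm_le_one (hwv.trans hv)]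
  calc anorm ω (radialProj v - radialProj w)
      ≤ anorm ω (max ‖v‖ 1 • radialProj v - max ‖w‖ 1 • radialProj w) :=
        anorm_sub_le_anorm_smul_sub_smul hdim halt hnd (norm_radialProj_of_one_lt hv)
          (norm_radialProj_le_one w) (le_max_right _ _) (max_le_max hwv le_rfl)
    _ = anorm ω (v - w) := by rw [max_norm_one_smul_radialProj, max_norm_one_smul_radialProj]
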